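/- Let h be a solution of the graphical dorsal-closure equation of class C²([0,ρ₀]×[0,T)), and suppose there exists B ∈ [0,∞) such that |h_uu(x, jδt)| ≤ B for all x ∈ [0,ρ₀] and all time indices j. Then for every time index j, 1/L[h(·, jδt)] − 1/L[(π(h))^j] ≤ (3/(2ρ₀)) · B · δu, where L[h(·,jδt)] = ∫₀^{ρ₀} √(1+h_u(u,jδt)²) du is the continuous length, π(h) is the restriction of h to the mesh, and L[(π(h))^j] = δu · Σ_{i=0}^{n−1} √(1 + ((D₊π(h))^j_i)²) is the discrete length. -/

import Mathlib

noncomputable section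

open Finset

/-- The forward difference operator `(D₊v)_k = (v_{k+1} - v_k)/δu`. -/
def dplus (δu : ℝ) (v : ℕ → ℝ) (k : ℕ) : ℝ := (v (k + 1) - v k) / δu

/-- The centred difference operator `(D₀v)_k = (v_{k+1} - v_{k-1})/(2δu)`
(used only at interior indices `k ≥ 1`). -/
def d0 (δu : ℝ) (v : ℕ → ℝ) (k : ℕ) : ℝ := (v (k + 1) - v (k - 1)) / (2 * δu)

/-- The second difference operator
`(D²v)_k = (v_{k+1} - 2v_k + v_{k-1})/δu²`. -/
def d2 (δu : ℝ) (v : ℕ → ℝ) (k : ℕ) : ℝ :=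
  (v (k + 1) - 2 * v k + v (k - 1)) / δu ^ 2

/-- The forward time difference operator `(D_t w)^j_k = (w^{j+1}_k - w^j_k)/δt`
for a mesh function `w` (time index first). -/
def dtime (δt : ℝ) (w : ℕ → ℕ → ℝ) (j k : ℕ) : ℝ := (w (j + 1) k - w j k) / δt

/-- The discrete length functional
`L[v] = δu Σ_{i<n} √(1 + ((D₊v)_i)²)`. -/
def dlen (δu : ℝ) (n : ℕ) (v : ℕ → ℝ) : ℝ :=
  δu * ∑ i ∈ Finset.range n, Real.sqrt (1 + dplus δu v i ^ 2)

/-- The discrete sup-norm (maximum of absolute values) over a finite set of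
spatial indices. -/
def supOn (s : Finset ℕ) (v : ℕ → ℝ) : ℝ := s.fold max 0 (fun k => |v k|)

/-- Partial derivative in the first (space) variable. -/
def pderivU (f : ℝ → ℝ → ℝ) : ℝ → ℝ → ℝ :=
  fun u t => deriv (fun u' => f u' t) u

/-- Partial derivative in the second (time) variable. -/
def pderivT (f : ℝ → ℝ → ℝ) : ℝ → ℝ → ℝ :=
  fun u t => deriv (fun t' => f u t') t

/-- The continuous length functional `L[h(·,t)] = ∫₀^{ρ₀} √(1 + h_u²) du`. -/
def glen (ρ₀ : ℝ) (h : ℝ → ℝ → ℝ) (t : ℝ) : ℝ :=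
  ∫ u in (0:ℝ)..ρ₀, Real.sqrt (1 + pderivU h u t ^ 2)

private lemma sqrt_one_add_sq_lip (a b : ℝ) :
    Real.sqrt (1 + a ^ 2) - Real.sqrt (1 + b ^ 2) ≤ |a - b| := by
  have hb2 : (0:ℝ) ≤ 1 + b ^ 2 := by positivity
  set s := Real.sqrt (1 + b ^ 2) with hs
  have hs0 : 0 ≤ s := Real.sqrt_nonneg _
  have hsb : |b| ≤ s := by
    rw [hs, ← Real.sqrt_sq_eq_abs]
    exact Real.sqrt_le_sqrt (by nlinarith)
  have hss : s ^ 2 = 1 + b ^ 2 := Real.sq_sqrt hb2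
  have key : Real.sqrt (1 + a ^ 2) ≤ s + |a - b| := by
    rw [show s + |a - b| = Real.sqrt ((s + |a - b|) ^ 2) from
      (Real.sqrt_sq (by positivity)).symm]
    apply Real.sqrt_le_sqrt
    have h1 : b * (a - b) ≤ s * |a - b| :=
      calc b * (a - b) ≤ |b * (a - b)| := le_abs_self _
        _ = |b| * |a - b| := abs_mul _ _
        _ ≤ s * |a - b| := mul_le_mul_of_nonneg_right hsb (abs_nonneg _)
    have h2 : |a - b| ^ 2 = (a - b) ^ 2 := sq_abs _
    nlinarith
  linarith

private lemma dlc_aux (ρ₀ B : ℝ) (hρ : 0 < ρ₀) (hB : 0 ≤ B) (n : ℕ) (hn : 0 < n)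
    (g : ℝ → ℝ) (hg : ContDiff ℝ 2 g)
    (hB2 : ∀ x ∈ Set.Icc (0:ℝ) ρ₀, |deriv (deriv g) x| ≤ B) :
    (∫ u in (0:ℝ)..ρ₀, Real.sqrt (1 + deriv g u ^ 2))⁻¹ -
      (dlen (ρ₀ / n) n (fun k => g ((k : ℝ) * (ρ₀ / n))))⁻¹ ≤
      3 / (2 * ρ₀) * B * (ρ₀ / n) := by
  have hn' : (0:ℝ) < n := Nat.cast_pos.mpr hn
  set δu : ℝ := ρ₀ / n with hδu
  have hδu0 : 0 < δu := div_pos hρ hn'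
  have hnδu : (n:ℝ) * δu = ρ₀ := by rw [hδu]; field_simp [hn'.ne']
  set f : ℝ → ℝ := fun u => Real.sqrt (1 + deriv g u ^ 2) with hf
  set c : ℕ → ℝ := fun i => Real.sqrt (1 + dplus δu (fun k => g ((k : ℝ) * δu)) i ^ 2)
    with hc
  have hgd : Differentiable ℝ g := hg.differentiable (by norm_num)
  have hdg : Differentiable ℝ (deriv g) := by
    have h2 : ContDiff ℝ (1 + 1 : WithTop ℕ∞) g := by rw [one_add_one_eq_two]; exact hg
    exact ((contDiff_succ_iff_deriv).mp h2).2.2.differentiable one_ne_zero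
  have hfc : Continuous f := by
    exact (continuous_const.add ((hg.continuous_deriv (by norm_num)).pow 2)).sqrt
  have hfint : ∀ a b : ℝ, IntervalIntegrable f MeasureTheory.volume a b := fun a b =>
    hfc.intervalIntegrable a b
  have hf1 : ∀ u : ℝ, 1 ≤ f u := by
    intro u
    calc (1:ℝ) = Real.sqrt 1 := Real.sqrt_one.symm
      _ ≤ f u := Real.sqrt_le_sqrt (by nlinarith [sq_nonneg (deriv g u)])
  have hc1 : ∀ i : ℕ, 1 ≤ c i := by
    intro i
    calc (1:ℝ) = Real.sqrt 1 := Real.sqrt_one.symm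
      _ ≤ c i := Real.sqrt_le_sqrt
        (by nlinarith [sq_nonneg (dplus δu (fun k => g ((k : ℝ) * δu)) i)])
  -- Lipschitz bound on deriv g
  have hlip : ∀ a ∈ Set.Icc (0:ℝ) ρ₀, ∀ b ∈ Set.Icc (0:ℝ) ρ₀,
      |deriv g a - deriv g b| ≤ B * |a - b| := by
    intro a ha b hb
    have := Convex.norm_image_sub_le_of_norm_deriv_le (f := deriv g)
      (s := Set.Icc (0:ℝ) ρ₀) (C := B) (fun x _ => hdg x)
      (fun x hx => hB2 x hx) (convex_Icc _ _) hb ha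
    simpa [Real.norm_eq_abs] using this
  -- adjacent intervals
  have hadj : ∑ i ∈ Finset.range n, (∫ u in ((i:ℝ) * δu)..(((i+1:ℕ)):ℝ) * δu, f u) =
      ∫ u in (0:ℝ)..ρ₀, f u := by
    have := intervalIntegral.sum_integral_adjacent_intervals
      (a := fun i : ℕ => (i:ℝ) * δu) (n := n) (f := f) (μ := MeasureTheory.volume)
      (fun k _ => hfint _ _)
    simpa [hnδu] using this
  -- per-interval estimate
  have key : ∀ i ∈ Finset.range n,
      (c i - B * δu) * δu ≤ ∫ u in ((i:ℝ) * δu)..(((i+1:ℕ)):ℝ) * δu, f u := by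
    intro i hi
    have hba : (((i+1:ℕ)):ℝ) * δu - (i:ℝ) * δu = δu := by push_cast; ring
    have hlt : (i:ℝ) * δu < (((i+1:ℕ)):ℝ) * δu := by linarith
    have hsub : Set.Icc ((i:ℝ) * δu) ((((i+1:ℕ)):ℝ) * δu) ⊆ Set.Icc (0:ℝ) ρ₀ := by
      apply Set.Icc_subset_Icc
      · positivity
      · have hin : ((i:ℝ) + 1) ≤ (n:ℝ) := by
          exact_mod_cast Nat.succ_le_of_lt (Finset.mem_range.mp hi)
        push_cast
        nlinarith
    obtain ⟨ξ, hξmem, hξ⟩ := exists_hasDerivAt_eq_slope g (deriv g) hlt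
      hg.continuous.continuousOn (fun y _ => (hgd y).hasDerivAt)
    have hslope : deriv g ξ = dplus δu (fun k => g ((k : ℝ) * δu)) i := by
      rw [hξ, hba]; rfl
    have hpt : ∀ u ∈ Set.Icc ((i:ℝ) * δu) ((((i+1:ℕ)):ℝ) * δu), c i - B * δu ≤ f u := by
      intro u hu
      have h1 : c i - f u ≤ |deriv g ξ - deriv g u| := by
        calc c i - f u
            = Real.sqrt (1 + dplus δu (fun k => g ((k : ℝ) * δu)) i ^ 2) -
              Real.sqrt (1 + deriv g u ^ 2) := rfl
          _ ≤ |deriv g ξ - deriv g u| := by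
              rw [hslope]; exact sqrt_one_add_sq_lip _ _
      have h2 : |deriv g ξ - deriv g u| ≤ B * |ξ - u| :=
        hlip ξ (hsub ⟨hξmem.1.le, hξmem.2.le⟩) u (hsub hu)
      have h3 : |ξ - u| ≤ δu := by
        rw [abs_le]
        obtain ⟨hu1, hu2⟩ := hu
        obtain ⟨hξ1, hξ2⟩ := hξmem
        constructor <;> linarith
      have h4 : B * |ξ - u| ≤ B * δu := mul_le_mul_of_nonneg_left h3 hB
      linarith
    calc (c i - B * δu) * δu
        = ∫ _ in ((i:ℝ) * δu)..(((i+1:ℕ)):ℝ) * δu, (c i - B * δu) := by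
          rw [intervalIntegral.integral_const, hba, smul_eq_mul, mul_comm]
      _ ≤ ∫ u in ((i:ℝ) * δu)..(((i+1:ℕ)):ℝ) * δu, f u :=
        intervalIntegral.integral_mono_on hlt.le intervalIntegrable_const (hfint _ _) hpt
  -- assemble
  set Lc : ℝ := ∫ u in (0:ℝ)..ρ₀, f u with hLc
  set Ld : ℝ := dlen δu n (fun k => g ((k : ℝ) * δu)) with hLd
  have hLdc : Ld = δu * ∑ i ∈ Finset.range n, c i := rfl
  have hsum : Ld - B * δu * ρ₀ ≤ Lc := by
    have hle := Finset.sum_le_sum key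
    have heq2 : ∑ i ∈ Finset.range n, (c i - B * δu) * δu = Ld - B * δu * ρ₀ := by
      rw [hLdc, ← hnδu]
      rw [show (fun i => (c i - B * δu) * δu) = fun i => c i * δu - B * δu * δu from by
        funext i; ring]
      rw [Finset.sum_sub_distrib, ← Finset.sum_mul, Finset.sum_const, Finset.card_range,
        nsmul_eq_mul]
      ring
    calc Ld - B * δu * ρ₀ = ∑ i ∈ Finset.range n, (c i - B * δu) * δu := heq2.symm
      _ ≤ ∑ i ∈ Finset.range n, ∫ u in ((i:ℝ) * δu)..(((i+1:ℕ)):ℝ) * δu, f u := hle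
      _ = Lc := hadj
  have hLcge : ρ₀ ≤ Lc := by
    have h1 := intervalIntegral.integral_mono_on (μ := MeasureTheory.volume) hρ.le
      intervalIntegrable_const (hfint 0 ρ₀) (fun u _ => hf1 u)
    simpa using h1
  have hLdge : ρ₀ ≤ Ld := by
    rw [hLdc, ← hnδu]
    have : (n:ℝ) ≤ ∑ i ∈ Finset.range n, c i := by
      calc (n:ℝ) = ∑ _ ∈ Finset.range n, (1:ℝ) := by simp
        _ ≤ _ := Finset.sum_le_sum (fun i _ => hc1 i)
    nlinarith
  have hLc0 : 0 < Lc := lt_of_lt_of_le hρ hLcge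
  have hLd0 : 0 < Ld := lt_of_lt_of_le hρ hLdge
  have heq : Lc⁻¹ - Ld⁻¹ = (Ld - Lc) / (Lc * Ld) := by
    field_simp
  rw [heq]
  rcases le_or_gt Ld Lc with hcase | hcase
  · have h0 : (Ld - Lc) / (Lc * Ld) ≤ 0 :=
      div_nonpos_of_nonpos_of_nonneg (by linarith) (by positivity)
    have : (0:ℝ) ≤ 3 / (2 * ρ₀) * B * δu := by positivity
    linarith
  · have hdiff : Ld - Lc ≤ B * δu * ρ₀ := by linarith
    have h1 : (Ld - Lc) / (Lc * Ld) ≤ (B * δu * ρ₀) / (ρ₀ * ρ₀) := by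
      apply div_le_div₀ (by positivity) hdiff (by positivity)
      exact mul_le_mul hLcge hLdge hρ.le (by linarith)
    have h2 : (B * δu * ρ₀) / (ρ₀ * ρ₀) = B * δu / ρ₀ := by
      field_simp
    have h3 : B * δu / ρ₀ ≤ 3 / (2 * ρ₀) * B * δu := by
      rw [div_le_iff₀ hρ]
      have : 3 / (2 * ρ₀) * B * δu * ρ₀ = (3/2) * (B * δu) := by
        field_simp
      rw [this]
      nlinarith [mul_nonneg hB hδu0.le]
    linarith

/-- Lemma 6.2, consistency of the discrete length: if `h` is
a `C²` solution of the graphical dorsal-closure equation whose second spatial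
derivative is bounded by `B` at all mesh times, then
`1/L[h(·,jδt)] − 1/L[(π(h))^j] ≤ (3/(2ρ₀)) B δu`. -/
theorem discrete_length_consistency (ρ₀ T : ℝ) (hρ : 0 < ρ₀) (hT : 0 < T)
    (n m : ℕ) (hn : 0 < n) (hm : 0 < m)
    (h : ℝ → ℝ → ℝ) (hh : ContDiff ℝ 2 (Function.uncurry h))
    (hpde : ∀ t ∈ Set.Ico (0:ℝ) T, ∀ u ∈ Set.Icc (0:ℝ) ρ₀,
      pderivT h u t =
        pderivU (pderivU h) u t / (1 + pderivU h u t ^ 2) +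
          (glen ρ₀ h t)⁻¹ * (pderivU h u t / (1 + pderivU h u t ^ 2)))
    (hbcN : ∀ t ∈ Set.Ico (0:ℝ) T, pderivU h 0 t = 0)
    (hbcD : ∀ t ∈ Set.Ico (0:ℝ) T, h ρ₀ t = 0)
    (B : ℝ) (hB : 0 ≤ B)
    (hbound : ∀ x ∈ Set.Icc (0:ℝ) ρ₀, ∀ j : ℕ, j < m →
      |pderivU (pderivU h) x ((j : ℝ) * (T / m))| ≤ B) :
    ∀ j : ℕ, j < m →
      (glen ρ₀ h ((j : ℝ) * (T / m)))⁻¹ -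
          (dlen (ρ₀ / n) n
            (fun k => h ((k : ℝ) * (ρ₀ / n)) ((j : ℝ) * (T / m))))⁻¹ ≤
        3 / (2 * ρ₀) * B * (ρ₀ / n) := by
  intro j hj
  exact dlc_aux ρ₀ B hρ hB n hn (fun u => h u ((j : ℝ) * (T / m)))
    (hh.comp (contDiff_id.prodMk contDiff_const))
    (fun x hx => hbound x hx j hj)
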